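/- arXiv:2202.05797 — 5 statements merged into one kernel-verified Lean document; each statement's English description precedes it below -/
import Mathlib

section
/- Let g₁(q) = ⟨q, x₁⟩ if ‖q‖* ≤ α₁ and +∞ otherwise, and g₂(q) = ⟨q, x₂⟩ if ‖q‖* ≤ α₂ and +∞ otherwise, where ‖·‖* is the dual norm. Then the infimal convolution evaluated at 0 satisfies (g₁ □ g₂)(0) = -min(α₁, α₂)·‖x₁ - x₂‖. -/
/-!
Since `‖-q‖ = ‖q‖`, the sum `g₁ q + g₂ (-q)` is `q (x₁ - x₂)` on the dual ball of
radius `min α₁ α₂` and `⊤` outside it, so the infimum is minus the support function of that ball at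
`x₁ - x₂`. Its lower bound is `|q x| ≤ ‖q‖ ‖x‖`; it is attained by Hahn–Banach, at `-r • g` for a
norming functional `g` of `x`.
-/

open ContinuousLinearMap

section DualBall

variable {E : Type*} [NormedAddCommGroup E] [NormedSpace ℝ E]

lemma neg_mul_norm_le_apply {q : E →L[ℝ] ℝ} {r : ℝ} (hq : ‖q‖ ≤ r) (x : E) :
    -(r * ‖x‖) ≤ q x :=
  calc -(r * ‖x‖) ≤ -(‖q‖ * ‖x‖) := by gcongr
    _ ≤ q x := neg_le_of_abs_le (q.le_opNorm x)

lemma exists_norm_le_apply_eq_neg_mul_norm {r : ℝ} (hr : 0 ≤ r) (x : E) :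
    ∃ q : E →L[ℝ] ℝ, ‖q‖ ≤ r ∧ q x = -(r * ‖x‖) := by
  obtain ⟨g, hg, hgx⟩ := exists_dual_vector'' ℝ x
  refine ⟨(-r) • g, ?_, by simp [hgx]⟩
  calc ‖(-r) • g‖ = r * ‖g‖ := by rw [norm_smul, norm_neg, Real.norm_of_nonneg hr]
    _ ≤ r := mul_le_of_le_one_right hr hg

theorem iInf_ite_norm_le_apply {r : ℝ} (hr : 0 ≤ r) (x : E) :
    (⨅ q : E →L[ℝ] ℝ, if ‖q‖ ≤ r then ((q x : ℝ) : EReal) else ⊤) = ((-(r * ‖x‖) : ℝ) : EReal) := by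
  apply le_antisymm
  · obtain ⟨q, hq, hqx⟩ := exists_norm_le_apply_eq_neg_mul_norm hr x
    exact (iInf_le _ q).trans_eq (by rw [if_pos hq, hqx])
  · refine le_iInf fun q => ?_
    split_ifs with hq
    · exact EReal.coe_le_coe_iff.mpr (neg_mul_norm_le_apply hq x)
    · exact le_top

lemma ite_norm_le_add_ite_norm_le (q : E →L[ℝ] ℝ) (x₁ x₂ : E) (α₁ α₂ : ℝ) :
    ((if ‖q‖ ≤ α₁ then ((q x₁ : ℝ) : EReal) else ⊤) +
        if ‖-q‖ ≤ α₂ then (((-q) x₂ : ℝ) : EReal) else ⊤) =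
      if ‖q‖ ≤ min α₁ α₂ then ((q (x₁ - x₂) : ℝ) : EReal) else ⊤ := by
  rw [norm_neg]
  by_cases h₁ : ‖q‖ ≤ α₁ <;> by_cases h₂ : ‖q‖ ≤ α₂
  · rw [if_pos h₁, if_pos h₂, if_pos (le_min h₁ h₂), ← EReal.coe_add, map_sub, neg_apply,
      sub_eq_add_neg]
  all_goals simp [h₁, h₂]

end DualBall

/-- Infimal convolution at 0 of two linear functions with bounded-dual-norm domains. -/
theorem stmt_7 {E : Type*} [NormedAddCommGroup E] [NormedSpace ℝ E]
    (x₁ x₂ : E) (α₁ α₂ : ℝ) (hα₁ : 0 < α₁) (hα₂ : 0 < α₂)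
    (g₁ g₂ : (E →L[ℝ] ℝ) → EReal)
    (hg₁ : ∀ q : E →L[ℝ] ℝ, g₁ q = if ‖q‖ ≤ α₁ then ((q x₁ : ℝ) : EReal) else ⊤)
    (hg₂ : ∀ q : E →L[ℝ] ℝ, g₂ q = if ‖q‖ ≤ α₂ then ((q x₂ : ℝ) : EReal) else ⊤) :
    (⨅ q : E →L[ℝ] ℝ, g₁ q + g₂ (-q)) =
      ((-(min α₁ α₂ * ‖x₁ - x₂‖) : ℝ) : EReal) := by
  simp only [hg₁, hg₂, ite_norm_le_add_ite_norm_le]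
  exact iInf_ite_norm_le_apply (le_min hα₁.le hα₂.le) (x₁ - x₂)
end

section
/- Let 1 < p < ∞ and let θ̄ be a dual vector with ‖θ̄‖_{p,*} = 1. If q₁, q₂ satisfy ‖q₁‖_{p,*} ≤ α₁, ‖q₂‖_{p,*} ≤ α₂, and q₁ + q₂ = (α₁ + α₂)·θ̄, then necessarily q₁ = α₁·θ̄ and q₂ = α₂·θ̄. -/
noncomputable def pnorm {n : ℕ} (p : ℝ) (v : Fin n → ℝ) : ℝ :=
  (∑ i, |v i| ^ p) ^ (1 / p)

/-!
Put `u = q₁ / α₁` and `w = q₂ / α₂`. Then `θ̄` is the convex combination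
`(α₁ u + α₂ w) / (α₁ + α₂)` of two points of the closed unit ball, and it lies on the unit
sphere. Since `v ↦ ∑ |vᵢ|ʳ` is strictly convex for `r > 1`, this forces `u = w = θ̄`.
-/

open Set

lemma StrictConvexOn.eq_of_le_map_add {𝕜 E β : Type*} [Field 𝕜] [LinearOrder 𝕜]
    [IsStrictOrderedRing 𝕜] [AddCommGroup E] [Module 𝕜 E] [AddCommMonoid β] [PartialOrder β]
    [IsOrderedCancelAddMonoid β] [Module 𝕜 β] [PosSMulMono 𝕜 β] {s : Set E} {f : E → β}
    (hf : StrictConvexOn 𝕜 s f) {x y : E} (hx : x ∈ s) (hy : y ∈ s) {a b : 𝕜} (ha : 0 < a)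
    (hb : 0 < b) (hab : a + b = 1) {c : β} (hfx : f x ≤ c) (hfy : f y ≤ c)
    (hc : c ≤ f (a • x + b • y)) : x = y := by
  by_contra hxy
  have hlt := hf.2 hx hy hxy ha hb hab
  have hle : a • f x + b • f y ≤ c := by
    calc a • f x + b • f y ≤ a • c + b • c := by gcongr
      _ = c := by rw [← add_smul, hab, one_smul]
  exact (hc.trans_lt (hlt.trans_le hle)).false

lemma strictConvexOn_abs_rpow {r : ℝ} (hr : 1 < r) :
    StrictConvexOn ℝ univ fun x : ℝ => |x| ^ r := by
  refine ⟨convex_univ, fun x _ y _ hxy a b ha hb hab => ?_⟩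
  simp only [smul_eq_mul]
  have htri : |a * x + b * y| ≤ a * |x| + b * |y| := by
    calc |a * x + b * y| ≤ |a * x| + |b * y| := abs_add_le _ _
      _ = a * |x| + b * |y| := by rw [abs_mul, abs_mul, abs_of_pos ha, abs_of_pos hb]
  rcases eq_or_ne |x| |y| with habs | habs
  · -- `|x| = |y|` with `x ≠ y` means `x = -y ≠ 0`, so the triangle inequality is strict.
    obtain rfl : x = -y := (abs_eq_abs.mp habs).resolve_left hxy
    have hy : y ≠ 0 := by rintro rfl; simp at hxy
    have htri_lt : |a * -y + b * y| < a * |-y| + b * |y| := by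
      rw [abs_neg, show a * -y + b * y = (b - a) * y by ring, abs_mul, ← add_mul]
      gcongr
      exact abs_sub_lt_iff.mpr ⟨by linarith, by linarith⟩
    calc |a * -y + b * y| ^ r < (a * |-y| + b * |y|) ^ r := by gcongr
      _ ≤ a * |-y| ^ r + b * |y| ^ r := by
        simpa only [smul_eq_mul] using (convexOn_rpow hr.le).2 (abs_nonneg (-y))
          (abs_nonneg y) ha.le hb.le hab
  · calc |a * x + b * y| ^ r ≤ (a * |x| + b * |y|) ^ r := by gcongr
      _ < a * |x| ^ r + b * |y| ^ r := by
        simpa only [smul_eq_mul] using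
          (strictConvexOn_rpow hr).2 (abs_nonneg x) (abs_nonneg y) habs ha hb hab

section PowSum

variable {ι : Type*} [Fintype ι] {r : ℝ}

noncomputable def powSum (r : ℝ) (v : ι → ℝ) : ℝ :=
  ∑ i, |v i| ^ r

lemma powSum_nonneg (v : ι → ℝ) : 0 ≤ powSum r v :=
  Finset.sum_nonneg fun _ _ => Real.rpow_nonneg (abs_nonneg _) r

lemma powSum_smul {c : ℝ} (hc : 0 ≤ c) (v : ι → ℝ) :
    powSum r (c • v) = c ^ r * powSum r v := by
  simp only [powSum, Pi.smul_apply, smul_eq_mul, abs_mul, abs_of_nonneg hc, Finset.mul_sum,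
    Real.mul_rpow hc (abs_nonneg _)]

lemma strictConvexOn_powSum (hr : 1 < r) : StrictConvexOn ℝ univ (powSum (ι := ι) r) := by
  refine ⟨convex_univ, fun u _ w _ huw a b ha hb hab => ?_⟩
  obtain ⟨j, hj⟩ := Function.ne_iff.mp huw
  calc powSum r (a • u + b • w) < ∑ i, (a * |u i| ^ r + b * |w i| ^ r) :=
        Finset.sum_lt_sum (fun i _ => (strictConvexOn_abs_rpow hr).convexOn.2 (mem_univ _)
            (mem_univ _) ha.le hb.le hab)
          ⟨j, Finset.mem_univ j, (strictConvexOn_abs_rpow hr).2 (mem_univ _) (mem_univ _)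
            hj ha hb hab⟩
    _ = a • powSum r u + b • powSum r w := by
        simp only [powSum, smul_eq_mul, Finset.sum_add_distrib, Finset.mul_sum]

end PowSum

lemma pnorm_rpow {n : ℕ} {r : ℝ} (hr : r ≠ 0) (v : Fin n → ℝ) : pnorm r v ^ r = powSum r v := by
  rw [pnorm, ← powSum, one_div, Real.rpow_inv_rpow (powSum_nonneg v) hr]

lemma powSum_inv_smul_le_one {n : ℕ} {r c : ℝ} (hr : 0 < r) (hc : 0 < c) {v : Fin n → ℝ}
    (hv : pnorm r v ≤ c) : powSum r (c⁻¹ • v) ≤ 1 := by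
  have hpow : powSum r v ≤ c ^ r := by
    rw [← pnorm_rpow hr.ne' v]
    exact Real.rpow_le_rpow (Real.rpow_nonneg (powSum_nonneg v) _) hv hr.le
  calc powSum r (c⁻¹ • v) = c⁻¹ ^ r * powSum r v := powSum_smul (inv_nonneg.mpr hc.le) v
    _ ≤ c⁻¹ ^ r * c ^ r := by gcongr
    _ = 1 := by rw [← Real.mul_rpow (inv_nonneg.mpr hc.le) hc.le, inv_mul_cancel₀ hc.ne',
          Real.one_rpow]

theorem stmt_10 (n : ℕ) (p r α₁ α₂ : ℝ) (hp : 1 < p) (hpr : 1 / p + 1 / r = 1)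
    (hα₁ : 0 < α₁) (hα₂ : 0 < α₂)
    (θb q₁ q₂ : Fin n → ℝ) (hθb : pnorm r θb = 1)
    (hq₁ : pnorm r q₁ ≤ α₁) (hq₂ : pnorm r q₂ ≤ α₂)
    (hsum : q₁ + q₂ = (α₁ + α₂) • θb) :
    q₁ = α₁ • θb ∧ q₂ = α₂ • θb := by
  have hr : 1 < r :=
    (Real.holderConjugate_iff.mpr ⟨hp, by simpa only [one_div] using hpr⟩).symm.lt
  have hr₀ : 0 < r := by linarith
  have hα : 0 < α₁ + α₂ := add_pos hα₁ hα₂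
  have hab : α₁ / (α₁ + α₂) + α₂ / (α₁ + α₂) = 1 := by rw [← add_div, div_self hα.ne']
  have hθ : θb = (α₁ / (α₁ + α₂)) • (α₁⁻¹ • q₁) + (α₂ / (α₁ + α₂)) • (α₂⁻¹ • q₂) := by
    ext i
    have hi := congrFun hsum i
    simp only [Pi.add_apply, Pi.smul_apply, smul_eq_mul] at hi ⊢
    field_simp
    linarith
  have huw : α₁⁻¹ • q₁ = α₂⁻¹ • q₂ :=
    (strictConvexOn_powSum hr).eq_of_le_map_add (mem_univ _) (mem_univ _) (by positivity)
      (by positivity) hab (powSum_inv_smul_le_one hr₀ hα₁ hq₁)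
      (powSum_inv_smul_le_one hr₀ hα₂ hq₂)
      (by rw [← hθ, ← pnorm_rpow hr₀.ne', hθb, Real.one_rpow])
  have hθu : θb = α₁⁻¹ • q₁ := by rw [hθ, ← huw, ← add_smul, hab, one_smul]
  constructor
  · rw [hθu, smul_inv_smul₀ hα₁.ne']
  · rw [hθu, huw, smul_inv_smul₀ hα₂.ne']
end

section
/- Let 1 < p < ∞, θ̄ with ‖θ̄‖_{p,*} = 1, and define g₁(q) = ⟨q, x₁⟩ on {‖q‖_{p,*} ≤ α₁} (+∞ elsewhere) and g₂(q) = ⟨q, x₂⟩ on {‖q‖_{p,*} ≤ α₂} (+∞ elsewhere). Then the infimal convolution satisfies (g₁ □ g₂)((α₁ + α₂)·θ̄) = ⟨θ̄, α₁·x₁ + α₂·x₂⟩. -/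
def dot {n : ℕ} (v w : Fin n → ℝ) : ℝ := ∑ i, v i * w i

lemma scalar_key {r a b s t : ℝ} (hr : 1 < r) (ha : 0 < a) (hb : 0 < b) (hab : a + b = 1) :
    |a*s + b*t| ^ r ≤ a * |s|^r + b * |t|^r ∧
      (s ≠ t → |a*s + b*t| ^ r < a * |s|^r + b * |t|^r) := by
  have hr0 : (0:ℝ) < r := lt_trans one_pos hr
  have h1 : |a*s + b*t| ≤ a*|s| + b*|t| := by
    calc |a*s+b*t| ≤ |a*s| + |b*t| := abs_add_le _ _
    _ = a*|s| + b*|t| := by rw [abs_mul, abs_mul, abs_of_pos ha, abs_of_pos hb]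
  have hcvx := (convexOn_rpow hr.le).2 (Set.mem_Ici.mpr (abs_nonneg s))
    (Set.mem_Ici.mpr (abs_nonneg t)) ha.le hb.le hab
  simp only [smul_eq_mul] at hcvx
  constructor
  · exact le_trans (Real.rpow_le_rpow (abs_nonneg _) h1 hr0.le) hcvx
  · intro hst
    by_cases habs : |s| = |t|
    · rcases abs_eq_abs.mp habs with h | h
      · exact absurd h hst
      · have ht0 : t ≠ 0 := by rintro rfl; simp at h; exact hst (by simp [h])
        have hlt : |a*s + b*t| < |t| := by
          have he : a*s + b*t = (b - a) * t := by rw [h]; ring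
          rw [he, abs_mul]
          have hba : |b - a| < 1 := by
            rw [abs_sub_lt_iff]; constructor <;> linarith
          calc |b-a| * |t| < 1 * |t| :=
            mul_lt_mul_of_pos_right hba (abs_pos.mpr ht0)
          _ = |t| := one_mul _
        calc |a*s + b*t| ^ r < |t| ^ r := Real.rpow_lt_rpow (abs_nonneg _) hlt hr0
        _ = a * |s|^r + b * |t|^r := by rw [habs, ← add_mul, hab, one_mul]
    · have hsc := (strictConvexOn_rpow hr).2 (Set.mem_Ici.mpr (abs_nonneg s))
        (Set.mem_Ici.mpr (abs_nonneg t)) habs ha hb hab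
      simp only [smul_eq_mul] at hsc
      exact lt_of_le_of_lt (Real.rpow_le_rpow (abs_nonneg _) h1 hr0.le) hsc

lemma unique_combo {n : ℕ} {r a b : ℝ} (hr : 1 < r) (ha : 0 < a) (hb : 0 < b)
    (hab : a + b = 1) (u v θ : Fin n → ℝ)
    (hθ : ∀ i, θ i = a * u i + b * v i)
    (hu : ∑ i, |u i| ^ r ≤ 1) (hv : ∑ i, |v i| ^ r ≤ 1)
    (h1 : ∑ i, |θ i| ^ r = 1) : u = v := by
  by_contra hne
  obtain ⟨i₀, hi₀⟩ : ∃ i, u i ≠ v i := by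
    by_contra h; push_neg at h; exact hne (funext h)
  have hlt : ∑ i, |θ i| ^ r < ∑ i, (a * |u i|^r + b * |v i|^r) := by
    apply Finset.sum_lt_sum
    · intro i _
      rw [hθ i]
      exact (scalar_key hr ha hb hab).1
    · exact ⟨i₀, Finset.mem_univ _, by rw [hθ i₀]; exact (scalar_key hr ha hb hab).2 hi₀⟩
  rw [h1, Finset.sum_add_distrib, ← Finset.mul_sum, ← Finset.mul_sum] at hlt
  nlinarith

theorem stmt_11 (n : ℕ) (p r α₁ α₂ : ℝ) (hp : 1 < p) (hpr : 1 / p + 1 / r = 1)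
    (hα₁ : 0 < α₁) (hα₂ : 0 < α₂)
    (x₁ x₂ θb : Fin n → ℝ) (hθb : pnorm r θb = 1)
    (g₁ g₂ : (Fin n → ℝ) → EReal)
    (hg₁ : ∀ q, g₁ q = if pnorm r q ≤ α₁ then ((dot q x₁ : ℝ) : EReal) else ⊤)
    (hg₂ : ∀ q, g₂ q = if pnorm r q ≤ α₂ then ((dot q x₂ : ℝ) : EReal) else ⊤) :
    (⨅ q : Fin n → ℝ, g₁ q + g₂ ((α₁ + α₂) • θb - q)) =
      ((dot θb (α₁ • x₁ + α₂ • x₂) : ℝ) : EReal) := by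
  have hp0 : (0:ℝ) < p := lt_trans one_pos hp
  have hpinv1 : 0 < 1/p := by positivity
  have hpinv2 : 1/p < 1 := by rw [div_lt_one hp0]; exact hp
  have hrinv1 : 0 < 1/r := by linarith
  have hrinv2 : 1/r < 1 := by linarith
  have hr0 : (0:ℝ) < r := by
    by_contra h; push_neg at h
    have : 1/r ≤ 0 := div_nonpos_of_nonneg_of_nonpos zero_le_one h
    linarith
  have hr : 1 < r := (div_lt_one hr0).mp hrinv2
  have hrne : r ≠ 0 := hr0.ne'
  have sum_nonneg' : ∀ (v : Fin n → ℝ), (0:ℝ) ≤ ∑ i, |v i| ^ r := fun v =>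
    Finset.sum_nonneg fun i _ => Real.rpow_nonneg (abs_nonneg _) r
  have pnorm_le_iff : ∀ (v : Fin n → ℝ) (α : ℝ), 0 < α →
      (pnorm r v ≤ α ↔ ∑ i, |v i| ^ r ≤ α ^ r) := by
    intro v α hα
    unfold pnorm
    rw [one_div, Real.rpow_inv_le_iff_of_pos (sum_nonneg' v) hα.le hr0]
  -- sum of |θb i|^r = 1
  have hθb1 : ∑ i, |θb i| ^ r = 1 := by
    have h := congrArg (· ^ r) hθb
    simp only [pnorm, Real.one_rpow] at h
    rwa [← Real.rpow_mul (sum_nonneg' θb), one_div, inv_mul_cancel₀ hrne,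
      Real.rpow_one] at h
  -- homogeneity
  have pnorm_smul : ∀ (c : ℝ), 0 ≤ c → ∀ (v : Fin n → ℝ), pnorm r (c • v) = c * pnorm r v := by
    intro c hc v
    unfold pnorm
    have : ∀ i, |(c • v) i| ^ r = c ^ r * |v i| ^ r := by
      intro i
      rw [Pi.smul_apply, smul_eq_mul, abs_mul, abs_of_nonneg hc,
        Real.mul_rpow hc (abs_nonneg _)]
    rw [Finset.sum_congr rfl (fun i _ => this i), ← Finset.mul_sum,
      Real.mul_rpow (Real.rpow_nonneg hc r) (sum_nonneg' v),
      ← Real.rpow_mul hc, mul_one_div, div_self hrne, Real.rpow_one]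
  have hsum : 0 < α₁ + α₂ := by linarith
  -- dot computation at the optimal point
  have hdot : dot (α₁ • θb) x₁ + dot (α₂ • θb) x₂ = dot θb (α₁ • x₁ + α₂ • x₂) := by
    unfold dot
    rw [← Finset.sum_add_distrib]
    apply Finset.sum_congr rfl
    intro i _
    simp [mul_add]
    ring
  have hdiff : (α₁ + α₂) • θb - α₁ • θb = α₂ • θb := by
    ext i; simp; ring
  apply le_antisymm
  · apply iInf_le_of_le (α₁ • θb)
    rw [hg₁, hg₂, hdiff]
    rw [if_pos (by rw [pnorm_smul α₁ hα₁.le, hθb, mul_one]),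
      if_pos (by rw [pnorm_smul α₂ hα₂.le, hθb, mul_one])]
    rw [← EReal.coe_add, hdot]
  · apply le_iInf
    intro q
    rw [hg₁, hg₂]
    by_cases h1 : pnorm r q ≤ α₁
    · by_cases h2 : pnorm r ((α₁ + α₂) • θb - q) ≤ α₂
      · rw [if_pos h1, if_pos h2]
        -- uniqueness: q = α₁ • θb
        have hq : q = α₁ • θb := by
          have huv := unique_combo (n := n) hr (a := α₁/(α₁+α₂)) (b := α₂/(α₁+α₂))
            (by positivity) (by positivity) (by field_simp)
            (α₁⁻¹ • q) (α₂⁻¹ • ((α₁ + α₂) • θb - q)) θb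
            (by intro i; simp; field_simp; ring)
            ?_ ?_ hθb1
          · -- q = α₁ • θb from u = v
            ext i
            have h := congrFun huv i
            simp only [Pi.smul_apply, Pi.sub_apply, smul_eq_mul] at h
            have h4 : (α₁+α₂) * q i = (α₁+α₂) * (α₁ * θb i) := by
              field_simp at h
              nlinarith [h]
            have h5 := mul_left_cancel₀ hsum.ne' h4
            rw [Pi.smul_apply, smul_eq_mul, h5]
          · -- sum for u
            rw [pnorm_le_iff q α₁ hα₁] at h1
            have : ∀ i, |(α₁⁻¹ • q) i| ^ r = (α₁⁻¹) ^ r * |q i| ^ r := by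
              intro i
              rw [Pi.smul_apply, smul_eq_mul, abs_mul, abs_of_nonneg (by positivity),
                Real.mul_rpow (by positivity) (abs_nonneg _)]
            rw [Finset.sum_congr rfl (fun i _ => this i), ← Finset.mul_sum]
            calc (α₁⁻¹) ^ r * ∑ i, |q i| ^ r ≤ (α₁⁻¹) ^ r * α₁ ^ r := by
                  apply mul_le_mul_of_nonneg_left h1 (Real.rpow_nonneg (by positivity) r)
              _ = 1 := by
                  rw [← Real.mul_rpow (by positivity) hα₁.le, inv_mul_cancel₀ hα₁.ne',
                    Real.one_rpow]
          · -- sum for v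
            rw [pnorm_le_iff _ α₂ hα₂] at h2
            have : ∀ i, |(α₂⁻¹ • ((α₁ + α₂) • θb - q)) i| ^ r
                = (α₂⁻¹) ^ r * |((α₁ + α₂) • θb - q) i| ^ r := by
              intro i
              rw [Pi.smul_apply, smul_eq_mul, abs_mul, abs_of_nonneg (by positivity),
                Real.mul_rpow (by positivity) (abs_nonneg _)]
            rw [Finset.sum_congr rfl (fun i _ => this i), ← Finset.mul_sum]
            calc (α₂⁻¹) ^ r * ∑ i, |((α₁ + α₂) • θb - q) i| ^ r
                ≤ (α₂⁻¹) ^ r * α₂ ^ r := by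
                  apply mul_le_mul_of_nonneg_left h2 (Real.rpow_nonneg (by positivity) r)
              _ = 1 := by
                  rw [← Real.mul_rpow (by positivity) hα₂.le, inv_mul_cancel₀ hα₂.ne',
                    Real.one_rpow]
        rw [hq, hdiff, ← EReal.coe_add, hdot]
      · rw [if_pos h1, if_neg h2, EReal.add_top_of_ne_bot (EReal.coe_ne_bot _)]
        exact le_top
    · rw [if_neg h1, EReal.top_add_of_ne_bot (by split <;> simp)]
      exact le_top
end

section
/- Let 1 < p < ∞ and ‖θ‖_{p,*} ≤ α₁ + α₂, with g₁, g₂ the linear functions with bounded-dual-norm domains as above. Then for any b ∈ [0,1]: (g₁ □ g₂)(b·θ) ≤ (b/(α₁+α₂))·(‖θ‖_{p,*}·min(α₁,α₂)·‖x₁-x₂‖_p + ⟨θ, α₁x₁ + α₂x₂⟩) − min(α₁,α₂)·‖x₁-x₂‖_p. -/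
open Finset

section pnorm

variable {n : ℕ}

lemma dot_eq_dotProduct (v w : Fin n → ℝ) : dot v w = v ⬝ᵥ w := rfl

lemma pnorm_nonneg (p : ℝ) (v : Fin n → ℝ) : 0 ≤ pnorm p v := by
  unfold pnorm; positivity

lemma pnorm_smul {p : ℝ} (hp : 0 < p) (c : ℝ) (v : Fin n → ℝ) :
    pnorm p (c • v) = |c| * pnorm p v := by
  have hterm (i : Fin n) : |(c • v) i| ^ p = |c| ^ p * |v i| ^ p := by
    rw [Pi.smul_apply, smul_eq_mul, abs_mul, Real.mul_rpow (abs_nonneg _) (abs_nonneg _)]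
  simp only [pnorm, hterm, ← mul_sum]
  rw [Real.mul_rpow (by positivity) (by positivity), ← Real.rpow_mul (abs_nonneg c),
    mul_one_div_cancel hp.ne', Real.rpow_one]

lemma pnorm_add_le {p : ℝ} (hp : 1 ≤ p) (v w : Fin n → ℝ) :
    pnorm p (v + w) ≤ pnorm p v + pnorm p w :=
  Real.Lp_add_le univ v w hp

lemma pnorm_smul_add_smul_le {r : ℝ} (hr : 1 ≤ r) (a s : ℝ) (v d : Fin n → ℝ)
    (hd : pnorm r d ≤ 1) : pnorm r (a • v + s • d) ≤ |a| * pnorm r v + |s| := by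
  have hr0 : 0 < r := by linarith
  calc pnorm r (a • v + s • d) ≤ |a| * pnorm r v + |s| * pnorm r d := by
        rw [← pnorm_smul hr0, ← pnorm_smul hr0]; exact pnorm_add_le hr _ _
    _ ≤ |a| * pnorm r v + |s| := by
        gcongr; exact mul_le_of_le_one_right (abs_nonneg s) hd

end pnorm

section duality

variable {p r : ℝ}

lemma abs_sign_mul_abs_rpow_rpow (hpr : p.HolderConjugate r) (t : ℝ) :
    |(SignType.sign t : ℝ) * |t| ^ (p - 1)| ^ r = |t| ^ p := by
  have hp1 : p - 1 ≠ 0 := sub_ne_zero.mpr hpr.lt.ne'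
  have habs : |(SignType.sign t : ℝ) * |t| ^ (p - 1)| = |t| ^ (p - 1) := by
    rcases lt_trichotomy t 0 with ht | rfl | ht <;> simp [*, Real.zero_rpow hp1] <;> positivity
  rw [habs, ← Real.rpow_mul (abs_nonneg t), hpr.sub_one_mul_conj]

lemma sign_mul_abs_rpow_mul_self (hp : 0 < p) (t : ℝ) :
    (SignType.sign t : ℝ) * |t| ^ (p - 1) * t = |t| ^ p := by
  rw [mul_right_comm, sign_mul_self, mul_comm, ← Real.rpow_add_one' (abs_nonneg t) (by linarith),
    sub_add_cancel]

variable {n : ℕ}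

lemma exists_pnorm_le_one_dot_eq_pnorm (hpr : p.HolderConjugate r) (w : Fin n → ℝ) :
    ∃ d : Fin n → ℝ, pnorm r d ≤ 1 ∧ dot d w = pnorm p w := by
  set S := ∑ i, |w i| ^ p with hS
  have hS0 : 0 ≤ S := by positivity
  set v : Fin n → ℝ := fun i ↦ SignType.sign (w i) * |w i| ^ (p - 1)
  have hv : pnorm r v = S ^ (1 / r) := by
    simp only [pnorm, v, abs_sign_mul_abs_rpow_rpow hpr, hS]
  have hvw : dot v w = S := by
    simp only [dot, v, sign_mul_abs_rpow_mul_self hpr.pos, hS]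
  refine ⟨S ^ (-(1 / r)) • v, ?_, ?_⟩
  · rw [pnorm_smul hpr.symm.pos, abs_of_nonneg (by positivity), hv]
    rcases hS0.eq_or_lt with hS0 | hS0
    · rw [← hS0, Real.zero_rpow (by simp [hpr.symm.ne_zero])]; simp
    · rw [Real.rpow_neg hS0.le, inv_mul_cancel₀ (by positivity)]
  · have hexp : -(1 / r) + 1 = 1 / p := by
      linear_combination -hpr.one_div_add_one_div
    rw [dot_eq_dotProduct, smul_dotProduct, ← dot_eq_dotProduct, hvw, smul_eq_mul,
      ← Real.rpow_add_one' hS0 (hexp ▸ hpr.one_div_ne_zero), hexp]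
    rfl

end duality

lemma exists_add_eq_smul_pnorm_le_dot_add_dot_eq {n : ℕ} {p r α₁ α₂ b : ℝ}
    (hpr : p.HolderConjugate r) (hα₁ : 0 < α₁) (hα₂ : 0 < α₂) (hb : b ∈ Set.Icc (0 : ℝ) 1)
    (x₁ x₂ θ : Fin n → ℝ) (hθ : pnorm r θ ≤ α₁ + α₂) :
    ∃ q₁ q₂ : Fin n → ℝ, q₁ + q₂ = b • θ ∧ pnorm r q₁ ≤ α₁ ∧ pnorm r q₂ ≤ α₂ ∧
      dot q₁ x₁ + dot q₂ x₂ = b / (α₁ + α₂) *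
          (pnorm r θ * min α₁ α₂ * pnorm p (x₁ - x₂) + dot θ (α₁ • x₁ + α₂ • x₂)) -
        min α₁ α₂ * pnorm p (x₁ - x₂) := by
  obtain ⟨d, hd, hdx⟩ := exists_pnorm_le_one_dot_eq_pnorm hpr (x₁ - x₂)
  set c := b / (α₁ + α₂) with hc_def
  set m := min α₁ α₂
  set s := m * (1 - c * pnorm r θ) with hs_def
  have hc : 0 ≤ c := div_nonneg hb.1 (by positivity)
  have hcθ : c * pnorm r θ ≤ 1 := by
    rw [div_mul_eq_mul_div, div_le_one (by positivity)]
    nlinarith [pnorm_nonneg r θ, hb.2]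
  have hs : 0 ≤ s := mul_nonneg (le_min hα₁.le hα₂.le) (sub_nonneg.2 hcθ)
  have hball (α σ : ℝ) (hα : 0 < α) (hm : m ≤ α) (hσ : |σ| = s) :
      pnorm r ((c * α) • θ + σ • d) ≤ α := by
    refine (pnorm_smul_add_smul_le hpr.symm.lt.le _ _ _ _ hd).trans ?_
    rw [abs_of_nonneg (by positivity), hσ]
    nlinarith [mul_nonneg (sub_nonneg.2 hm) (sub_nonneg.2 hcθ)]
  refine ⟨(c * α₁) • θ + (-s) • d, (c * α₂) • θ + s • d, ?_,
    hball _ _ hα₁ (min_le_left _ _) (by rw [abs_neg, abs_of_nonneg hs]),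
    hball _ _ hα₂ (min_le_right _ _) (abs_of_nonneg hs), ?_⟩
  · have hcα : c * α₁ + c * α₂ = b := by
      rw [← mul_add, hc_def, div_mul_cancel₀ _ (by positivity)]
    rw [← hcα]
    module
  · simp only [dot_eq_dotProduct, add_dotProduct, smul_dotProduct, dotProduct_add,
      dotProduct_smul, dotProduct_sub, smul_eq_mul] at hdx ⊢
    linear_combination (-s) * hdx + pnorm p (x₁ - x₂) * hs_def

theorem stmt_12 (n : ℕ) (p r α₁ α₂ b : ℝ) (hp : 1 < p) (hpr : 1 / p + 1 / r = 1)
    (hα₁ : 0 < α₁) (hα₂ : 0 < α₂) (hb : b ∈ Set.Icc (0 : ℝ) 1)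
    (x₁ x₂ θ : Fin n → ℝ) (hθ : pnorm r θ ≤ α₁ + α₂)
    (g₁ g₂ : (Fin n → ℝ) → EReal)
    (hg₁ : ∀ q, g₁ q = if pnorm r q ≤ α₁ then ((dot q x₁ : ℝ) : EReal) else ⊤)
    (hg₂ : ∀ q, g₂ q = if pnorm r q ≤ α₂ then ((dot q x₂ : ℝ) : EReal) else ⊤) :
    (⨅ q : Fin n → ℝ, g₁ q + g₂ (b • θ - q)) ≤
      (((b / (α₁ + α₂)) *
          (pnorm r θ * min α₁ α₂ * pnorm p (x₁ - x₂) + dot θ (α₁ • x₁ + α₂ • x₂)) -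
        min α₁ α₂ * pnorm p (x₁ - x₂) : ℝ) : EReal) := by
  have hpq : p.HolderConjugate r :=
    Real.holderConjugate_iff.mpr ⟨hp, by simpa only [one_div] using hpr⟩
  obtain ⟨q₁, q₂, hsum, hq₁, hq₂, hval⟩ :=
    exists_add_eq_smul_pnorm_le_dot_add_dot_eq hpq hα₁ hα₂ hb x₁ x₂ θ hθ
  refine iInf_le_of_le q₁ (le_of_eq ?_)
  rw [← hsum, add_sub_cancel_left, hg₁, hg₂, if_pos hq₁, if_pos hq₂, ← hval, EReal.coe_add]
end

section
/- If ‖θ‖* > α₁ + α₂ (where ‖·‖* is the dual norm), then sup over x of (f(⟨θ, x⟩) − α₁·‖x₁ − x‖ − α₂·‖x₂ − x‖) = +∞, where f(t) = log(1 + exp(t)). -/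
theorem stmt_13 {E : Type*} [NormedAddCommGroup E] [NormedSpace ℝ E]
    (θ : E →L[ℝ] ℝ) (x₁ x₂ : E) (α₁ α₂ : ℝ)
    (hα₁ : 0 ≤ α₁) (hα₂ : 0 ≤ α₂) (hθ : α₁ + α₂ < ‖θ‖) :
    (⨆ x : E,
        ((Real.log (1 + Real.exp (θ x)) - α₁ * ‖x₁ - x‖ - α₂ * ‖x₂ - x‖ : ℝ) : EReal)) =
      ⊤ := by
  -- key lower bound: log(1+exp s) ≥ s
  have hf : ∀ s : ℝ, s ≤ Real.log (1 + Real.exp s) := by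
    intro s
    calc s = Real.log (Real.exp s) := (Real.log_exp s).symm
    _ ≤ Real.log (1 + Real.exp s) :=
        Real.log_le_log (Real.exp_pos s) (by linarith [Real.exp_pos s])
  obtain ⟨v, hv1, hv2⟩ := θ.exists_lt_apply_of_lt_opNorm hθ
  set w : E := if 0 ≤ θ v then v else -v with hw
  have hw1 : ‖w‖ ≤ 1 := by
    rw [hw]; split <;> simp [le_of_lt hv1]
  have hw2 : α₁ + α₂ < θ w := by
    rw [hw]
    rcases le_or_gt 0 (θ v) with h | h
    · simp only [if_pos h]
      rwa [Real.norm_eq_abs, abs_of_nonneg h] at hv2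
    · simp only [if_neg (not_le.mpr h), map_neg]
      rwa [Real.norm_eq_abs, abs_of_neg h] at hv2
  set δ : ℝ := θ w - (α₁ + α₂) with hδ
  have hδpos : 0 < δ := by simp [hδ]; linarith
  rw [iSup_eq_top]
  intro b hb
  induction b using EReal.rec with
  | bot => exact ⟨0, EReal.bot_lt_coe _⟩
  | top => exact absurd hb (lt_irrefl _)
  | coe M =>
    set C : ℝ := α₁ * ‖x₁‖ + α₂ * ‖x₂‖ with hC
    set t : ℝ := max 0 ((M + C + 1) / δ) with ht
    have ht0 : 0 ≤ t := le_max_left _ _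
    have htδ : M + C + 1 ≤ t * δ := by
      have : (M + C + 1) / δ ≤ t := le_max_right _ _
      calc M + C + 1 = ((M + C + 1) / δ) * δ := by field_simp
      _ ≤ t * δ := by nlinarith
    refine ⟨t • w, ?_⟩
    rw [EReal.coe_lt_coe_iff]
    have key : M < Real.log (1 + Real.exp (θ (t • w))) - α₁ * ‖x₁ - t • w‖ - α₂ * ‖x₂ - t • w‖ := by
      have h1 : θ (t • w) ≤ Real.log (1 + Real.exp (θ (t • w))) := hf _
      have h2 : θ (t • w) = t * θ w := by simp
      have h3 : ‖x₁ - t • w‖ ≤ ‖x₁‖ + t * ‖w‖ := by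
        calc ‖x₁ - t • w‖ ≤ ‖x₁‖ + ‖t • w‖ := norm_sub_le _ _
        _ = ‖x₁‖ + t * ‖w‖ := by rw [norm_smul, Real.norm_eq_abs, abs_of_nonneg ht0]
      have h4 : ‖x₂ - t • w‖ ≤ ‖x₂‖ + t * ‖w‖ := by
        calc ‖x₂ - t • w‖ ≤ ‖x₂‖ + ‖t • w‖ := norm_sub_le _ _
        _ = ‖x₂‖ + t * ‖w‖ := by rw [norm_smul, Real.norm_eq_abs, abs_of_nonneg ht0]
      have h5 : t * ‖w‖ ≤ t := by nlinarith
      nlinarith [mul_nonneg hα₁ (norm_nonneg x₁), mul_nonneg hα₂ (norm_nonneg x₂),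
        mul_le_mul_of_nonneg_left h3 hα₁, mul_le_mul_of_nonneg_left h4 hα₂,
        mul_le_mul_of_nonneg_left h5 hα₁, mul_le_mul_of_nonneg_left h5 hα₂]
    exact key
end
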